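/- The rule f^> defined on the domain 𝒮 of separable preferences by: x ∈ f^>(P_N) iff |{T ∈ t(P_N) : x ∈ T}| > |t(P_N)|/2, where t(P_N) = {t(P_i) : i ∈ N} is the set of distinct top sets of the profile, satisfies ontoness, tops-onliness, false-name-proofness, participation, and object neutrality. -/

import Mathlib

/-! ## Basic framework: preferences, profiles, voting rules, axioms -/

/-- A preference is a strict linear order on the set `A` of alternatives, encoded as a
`LinearOrder` structure on `A`; alternative `x` is strictly preferred to `y` iff `y < x`
(i.e. "greater is better"). -/
abbrev Pref (A : Type*) := LinearOrder A

/-- Strict preference: `x` is strictly preferred to `y` under `p`. -/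
def Pref.pref {A : Type*} (p : Pref A) (x y : A) : Prop := p.lt y x

/-- Weak preference (the weak counterpart `R` of the strict preference `P`):
`x` is weakly preferred to `y` under `p`. -/
def Pref.wpref {A : Type*} (p : Pref A) (x y : A) : Prop := p.le y x

/-- The top (most preferred) alternative of a preference. -/
noncomputable def Pref.top {A : Type*} [Fintype A] [Nonempty A] (p : Pref A) : A :=
  @Finset.max' A p Finset.univ Finset.univ_nonempty

/-- The bottom (least preferred) alternative of a preference. -/
noncomputable def Pref.bot {A : Type*} [Fintype A] [Nonempty A] (p : Pref A) : A :=
  @Finset.min' A p Finset.univ Finset.univ_nonempty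

/-- A profile over the society `N` (a finite set of voters, indexed by naturals):
it assigns a preference to each member of `N`. -/
abbrev Profile (A : Type*) (N : Finset ℕ) := (i : ℕ) → i ∈ N → Pref A

/-- The profile `P` takes values in the domain `D` of preferences. -/
def Profile.inDomain {A : Type*} {N : Finset ℕ} (P : Profile A N) (D : Set (Pref A)) : Prop :=
  ∀ i (hi : i ∈ N), P i hi ∈ D

/-- A (variable-population) voting rule: it assigns an alternative to every society
together with a profile over it. -/
abbrev Rule (A : Type*) := (N : Finset ℕ) → Profile A N → A

/-- Ontoness on the domain `D`: for every society and every alternative, some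
`D`-profile realizes that alternative. -/
def OntoOn {A : Type*} (D : Set (Pref A)) (f : Rule A) : Prop :=
  ∀ N : Finset ℕ, N.Nonempty → ∀ a : A, ∃ P : Profile A N, P.inDomain D ∧ f N P = a

/-- Tops-onliness on the domain `D`: two `D`-profiles with the same tops get the
same outcome. -/
def TopsOnlyOn {A : Type*} [Fintype A] [Nonempty A] (D : Set (Pref A)) (f : Rule A) : Prop :=
  ∀ N : Finset ℕ, N.Nonempty → ∀ P P' : Profile A N, P.inDomain D → P'.inDomain D →
    (∀ i (hi : i ∈ N), (P i hi).top = (P' i hi).top) → f N P = f N P'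

/-- False-name-proofness on the domain `D`: if a voter `i` of the society `N` casts,
under fresh identities `N'`, extra votes identical to her own preference, the outcome
does not improve for her. -/
def FalseNameProofOn {A : Type*} (D : Set (Pref A)) (f : Rule A) : Prop :=
  ∀ N N' : Finset ℕ, N.Nonempty → N'.Nonempty → Disjoint N N' →
    ∀ P : Profile A (N ∪ N'), P.inDomain D →
      ∀ i (hi : i ∈ N),
        (∀ j (hj : j ∈ N'),
            P j (Finset.mem_union_right N hj) = P i (Finset.mem_union_left N' hi)) →
        (P i (Finset.mem_union_left N' hi)).wpref
          (f N (fun j hj => P j (Finset.mem_union_left N' hj)))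
          (f (N ∪ N') P)

/-- Participation on the domain `D`: no voter gains by abstaining. -/
def ParticipationOn {A : Type*} (D : Set (Pref A)) (f : Rule A) : Prop :=
  ∀ N : Finset ℕ, 2 ≤ N.card → ∀ P : Profile A N, P.inDomain D →
    ∀ i (hi : i ∈ N),
      (P i hi).wpref (f N P) (f (N.erase i) (fun j hj => P j (Finset.mem_of_mem_erase hj)))

lemma mem_of_mem_image_perm {σ : Equiv.Perm ℕ} {N : Finset ℕ} {j : ℕ}
    (hj : j ∈ N.image σ) : σ.symm j ∈ N := by
  obtain ⟨i, hi, rfl⟩ := Finset.mem_image.mp hj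
  simpa using hi

/-- The permuted profile `σ(P_N)` over the society `σ(N)`: voter `σ i` gets the
preference `P i`. -/
def permProfile {A : Type*} (σ : Equiv.Perm ℕ) {N : Finset ℕ} (P : Profile A N) :
    Profile A (N.image σ) :=
  fun j hj => P (σ.symm j) (mem_of_mem_image_perm hj)

/-- Anonymity on the domain `D`: permuting the voters' identities does not change
the outcome. -/
def AnonymousOn {A : Type*} (D : Set (Pref A)) (f : Rule A) : Prop :=
  ∀ (σ : Equiv.Perm ℕ) (N : Finset ℕ), N.Nonempty → ∀ P : Profile A N, P.inDomain D →
    f (N.image σ) (permProfile σ P) = f N P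

/-- Relabeling a preference along a permutation `γ` of the alternatives: in the new
preference, `γ x` is strictly preferred to `γ y` iff `x` was strictly preferred to `y`. -/
noncomputable def Pref.relabel {A : Type*} (p : Pref A) (γ : Equiv.Perm A) : Pref A :=
  @LinearOrder.lift' A A p γ.symm γ.symm.injective

/-- Neutrality on the domain `D`: relabeling the alternatives by a permutation `γ`
relabels the outcome accordingly. -/
def NeutralOn {A : Type*} (D : Set (Pref A)) (f : Rule A) : Prop :=
  ∀ (γ : Equiv.Perm A) (N : Finset ℕ), N.Nonempty → ∀ P : Profile A N, P.inDomain D →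
    γ (f N P) = f N (fun i hi => (P i hi).relabel γ)

/-! ## The domain of preferences over subsets of a set `O` of objects -/

/-- Object neutrality: permuting the objects by `μ` (which permutes every subset of
objects pointwise) relabels the outcome accordingly. -/
def ObjectNeutralOn {O : Type*} [Fintype O] [DecidableEq O]
    (D : Set (Pref (Finset O))) (f : Rule (Finset O)) : Prop :=
  ∀ (μ : Equiv.Perm O) (N : Finset ℕ), N.Nonempty →
    ∀ P : Profile (Finset O) N, P.inDomain D →
      (f N P).image μ = f N (fun i hi => (P i hi).relabel μ.finsetCongr)

/-- A preference over subsets of objects is separable if adding an object `x ∉ S` to a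
set `S` improves the set exactly when `{x}` is preferred to `∅`. -/
def Separable {O : Type*} [Fintype O] [DecidableEq O] (p : Pref (Finset O)) : Prop :=
  ∀ (S : Finset O) (x : O), x ∉ S → (p.pref (insert x S) S ↔ p.pref {x} (∅ : Finset O))

/-- The domain of separable preferences over subsets of objects. -/
def SepDom (O : Type*) [Fintype O] [DecidableEq O] : Set (Pref (Finset O)) :=
  {p | Separable p}

/-- `t(P_N)`: the set of distinct top sets of the profile `P`. -/
noncomputable def distinctTops {O : Type*} [Fintype O] [DecidableEq O] {N : Finset ℕ}
    (P : Profile (Finset O) N) : Finset (Finset O) :=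
  N.attach.image fun i => (P i.1 i.2).top

/-- The rule `f^>`: an object is chosen iff it belongs to strictly more than half of the
distinct top sets of the profile. -/
noncomputable def fGt (O : Type*) [Fintype O] [DecidableEq O] : Rule (Finset O) :=
  fun N P =>
    Finset.univ.filter fun x =>
      (distinctTops P).card < 2 * ((distinctTops P).filter fun T => x ∈ T).card

/-- The rule `f^≥`: an object is chosen iff it belongs to at least half of the
distinct top sets of the profile. -/
noncomputable def fGe (O : Type*) [Fintype O] [DecidableEq O] : Rule (Finset O) :=
  fun N P =>
    Finset.univ.filter fun x =>
      (distinctTops P).card ≤ 2 * ((distinctTops P).filter fun T => x ∈ T).card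

/-- `g` is the tops-only extension to the domain `Dbig` (⊇ separable preferences) of the
tops-only rule `f` defined on the separable domain: on every `Dbig`-profile `P`, `g`
agrees with the value of `f` at any separable profile `Q` having the same tops as `P`. -/
def IsTopsOnlyExtensionOn {O : Type*} [Fintype O] [DecidableEq O]
    (Dbig : Set (Pref (Finset O))) (f g : Rule (Finset O)) : Prop :=
  ∀ N : Finset ℕ, N.Nonempty →
    ∀ P : Profile (Finset O) N, P.inDomain Dbig →
      ∀ Q : Profile (Finset O) N, Q.inDomain (SepDom O) →
        (∀ i (hi : i ∈ N), (P i hi).top = (Q i hi).top) → g N P = f N Q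

/-!
`f^>` only sees the set `D` of distinct tops. Tops-onliness follows at once, clones add no
new top (false-name-proofness), and majority commutes with relabelling objects (object
neutrality). A unanimous profile returns its common top, and the Hamming-distance preference
to any set `a` is separable with top `a` (ontoness).

For participation: voter `i` joining turns `D` into `insert t D`, `t` her top. If `t ∉ D`,
the threshold `|D|/2` grows by `1/2` while the support of every object of `t` grows by `1`,
so each object of `t` can only enter the majority and each object outside `t` can only leave
it. Separability gives that a set agreeing with the top wherever another set does is weakly
better: toggle the objects one at a time, each toggle towards the top being an improvement.
-/

open Finset
open scoped symmDiff

namespace Pref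

variable {A : Type*} (p : Pref A)

lemma wpref_refl (a : A) : p.wpref a a :=
  p.le_refl a

lemma wpref_of_pref {a b : A} (h : p.pref a b) : p.wpref a b := by
  let _ := p
  exact le_of_lt h

lemma wpref_trans {a b c : A} (hab : p.wpref a b) (hbc : p.wpref b c) : p.wpref a c :=
  p.le_trans _ _ _ hbc hab

lemma not_pref_of_pref {a b : A} (h : p.pref a b) : ¬ p.pref b a := by
  let _ := p
  exact lt_asymm h

lemma pref_of_not_pref {a b : A} (h : ¬ p.pref a b) (hne : a ≠ b) : p.pref b a := by
  let _ := p
  exact lt_of_le_of_ne (not_lt.mp h) hne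

variable [Fintype A] [Nonempty A]

lemma wpref_top (a : A) : p.wpref p.top a :=
  @Finset.le_max' A p univ a (mem_univ a)

lemma pref_top {a : A} (h : a ≠ p.top) : p.pref p.top a := by
  let _ := p
  exact lt_of_le_of_ne (p.wpref_top a) h

lemma not_pref_top (a : A) : ¬ p.pref a p.top := by
  let _ := p
  exact not_lt.mpr (p.wpref_top a)

lemma top_eq_of_forall_pref {a : A} (h : ∀ b, b ≠ a → p.pref a b) : p.top = a := by
  by_contra hne
  exact p.not_pref_top a (h _ hne)

lemma relabel_top (γ : Equiv.Perm A) : (p.relabel γ).top = γ p.top := by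
  refine top_eq_of_forall_pref _ fun b hb => ?_
  show p.lt (γ.symm b) (γ.symm (γ p.top))
  rw [Equiv.symm_apply_apply]
  exact p.pref_top fun h => hb (by rw [← h, Equiv.apply_symm_apply])

end Pref

section Separable

variable {O : Type*} [Fintype O] [DecidableEq O] {p : Pref (Finset O)}

lemma Separable.pref_insert_iff (hp : Separable p) {S : Finset O} {x : O} (hx : x ∉ S) :
    p.pref (insert x S) S ↔ x ∈ p.top := by
  rw [hp S x hx]
  constructor
  · intro hpref
    by_contra hxt
    exact p.not_pref_top _ ((hp p.top x hxt).mpr hpref)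
  · intro hxt
    rw [← hp _ x (notMem_erase x _), insert_erase hxt]
    exact p.pref_top fun h => notMem_erase x p.top (by rw [h]; exact hxt)

lemma Separable.pref_symmDiff_singleton (hp : Separable p) {S : Finset O} {x : O}
    (hx : x ∈ S ↔ x ∈ p.top) : p.pref S (S ∆ {x}) := by
  by_cases hxS : x ∈ S
  · have h := hp.pref_insert_iff (notMem_erase x S)
    rw [insert_erase hxS] at h
    rw [symmDiff_of_ge (singleton_subset_iff.mpr hxS), ← erase_eq]
    exact h.mpr (hx.mp hxS)
  · rw [(disjoint_singleton_right.mpr hxS).symmDiff_eq_sup, sup_eq_union, union_comm,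
      ← insert_eq]
    refine p.pref_of_not_pref (fun h => hxS (hx.mpr ((hp.pref_insert_iff hxS).mp h))) ?_
    exact fun h => hxS (h ▸ mem_insert_self x S)

lemma Separable.wpref_symmDiff_of_disjoint (hp : Separable p) {T E : Finset O}
    (hdisj : Disjoint E (T ∆ p.top)) : p.wpref T (T ∆ E) := by
  induction E using Finset.induction_on with
  | empty => simpa [← bot_eq_empty] using p.wpref_refl T
  | insert x E hxE ih =>
    have hxT : x ∈ T ↔ x ∈ p.top := by
      have := disjoint_left.mp hdisj (mem_insert_self x E)
      simp only [mem_symmDiff] at this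
      tauto
    have hstep : T ∆ insert x E = (T ∆ E) ∆ {x} := by
      rw [insert_eq, ← sup_eq_union, ← (disjoint_singleton_left.mpr hxE).symmDiff_eq_sup,
        symmDiff_comm ({x} : Finset O), symmDiff_assoc]
    rw [hstep]
    refine p.wpref_trans (ih (disjoint_of_subset_left (subset_insert x E) hdisj))
      (p.wpref_of_pref (hp.pref_symmDiff_singleton ?_))
    simp only [mem_symmDiff, hxE]
    tauto

lemma Separable.wpref_of_symmDiff_top_subset (hp : Separable p) {S T : Finset O}
    (h : T ∆ p.top ⊆ S ∆ p.top) : p.wpref T S := by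
  have hdisj : Disjoint (T ∆ S) (T ∆ p.top) := by
    rw [disjoint_left]
    intro x hxTS hxT
    have := h hxT
    simp only [mem_symmDiff] at hxTS hxT this
    tauto
  simpa [symmDiff_symmDiff_cancel_left] using hp.wpref_symmDiff_of_disjoint hdisj

end Separable

section Hamming

variable {O : Type*} [Fintype O] [DecidableEq O]

/-- Smaller Hamming distance to `a` is better; the enumeration of `Finset O` only breaks ties. -/
noncomputable def hammingPref (a : Finset O) : Pref (Finset O) :=
  LinearOrder.lift' (fun S => toLex (OrderDual.toDual #(S ∆ a), Fintype.equivFin (Finset O) S))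
    fun _ _ h => (Fintype.equivFin _).injective (Prod.mk.inj (toLex.injective h)).2

lemma hammingPref_pref_of_card_lt {a S T : Finset O} (h : #(S ∆ a) < #(T ∆ a)) :
    (hammingPref a).pref S T :=
  Prod.Lex.toLex_lt_toLex.mpr (Or.inl h)

lemma hammingPref_top (a : Finset O) : (hammingPref a).top = a :=
  Pref.top_eq_of_forall_pref _ fun _ hb =>
    hammingPref_pref_of_card_lt (by simpa [card_pos] using hb)

lemma hammingPref_pref_insert_iff {a S : Finset O} {x : O} (hx : x ∉ S) :
    (hammingPref a).pref (insert x S) S ↔ x ∈ a := by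
  by_cases hxa : x ∈ a
  · have hcard : #(insert x S ∆ a) + 1 = #(S ∆ a) := by
      have hset : insert x S ∆ a = (S ∆ a).erase x := by
        ext y; by_cases hy : y = x <;> simp_all [mem_symmDiff]
      rw [hset, card_erase_add_one (by simp [mem_symmDiff, hx, hxa])]
    simp only [hxa, iff_true]
    exact hammingPref_pref_of_card_lt (by omega)
  · have hcard : #(insert x S ∆ a) = #(S ∆ a) + 1 := by
      have hset : insert x S ∆ a = insert x (S ∆ a) := by
        ext y; by_cases hy : y = x <;> simp_all [mem_symmDiff]
      rw [hset, card_insert_of_notMem (by simp [mem_symmDiff, hx, hxa])]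
    simp only [hxa, iff_false]
    exact (hammingPref a).not_pref_of_pref (hammingPref_pref_of_card_lt (by omega))

lemma hammingPref_separable (a : Finset O) : Separable (hammingPref a) := fun S x hx => by
  rw [hammingPref_pref_insert_iff hx, ← insert_empty_eq x,
    hammingPref_pref_insert_iff (notMem_empty x)]

end Hamming

section StrictMajority

variable {O : Type*} [Fintype O] [DecidableEq O]

noncomputable def strictMajority (D : Finset (Finset O)) : Finset O :=
  univ.filter fun x => #D < 2 * #(D.filter fun T => x ∈ T)

lemma fGt_eq_strictMajority {N : Finset ℕ} (P : Profile (Finset O) N) :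
    fGt O N P = strictMajority (distinctTops P) :=
  rfl

lemma strictMajority_singleton (a : Finset O) : strictMajority {a} = a := by
  ext x
  by_cases hx : x ∈ a <;> simp [strictMajority, filter_singleton, hx]

lemma strictMajority_image_finsetCongr (μ : Equiv.Perm O) (D : Finset (Finset O)) :
    strictMajority (D.image μ.finsetCongr) = (strictMajority D).image μ := by
  ext x
  simp only [strictMajority, filter_image, card_image_of_injective _ μ.finsetCongr.injective,
    Equiv.finsetCongr_apply, mem_map_equiv, mem_filter, mem_univ, true_and, mem_image]
  constructor
  · intro h
    exact ⟨μ.symm x, h, μ.apply_symm_apply x⟩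
  · rintro ⟨y, hy, rfl⟩
    simpa using hy

lemma symmDiff_strictMajority_insert_subset (t : Finset O) (D : Finset (Finset O)) :
    strictMajority (insert t D) ∆ t ⊆ strictMajority D ∆ t := by
  by_cases ht : t ∈ D
  · rw [insert_eq_of_mem ht]
  have hcount (x : O) : #((insert t D).filter fun T => x ∈ T) =
      #(D.filter fun T => x ∈ T) + if x ∈ t then 1 else 0 := by
    rw [filter_insert]
    split_ifs with hx
    · exact card_insert_of_notMem fun h => ht (mem_filter.mp h).1
    · rfl
  intro x
  simp only [mem_symmDiff, strictMajority, mem_filter, mem_univ, true_and,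
    card_insert_of_notMem ht, hcount]
  by_cases hx : x ∈ t <;> simp [hx] <;> omega

end StrictMajority

section DistinctTops

variable {O : Type*} [Fintype O] [DecidableEq O] {N : Finset ℕ}

lemma mem_distinctTops {P : Profile (Finset O) N} {T : Finset O} :
    T ∈ distinctTops P ↔ ∃ i, ∃ hi : i ∈ N, (P i hi).top = T := by
  simp [distinctTops]

lemma distinctTops_congr {P P' : Profile (Finset O) N}
    (h : ∀ i (hi : i ∈ N), (P i hi).top = (P' i hi).top) : distinctTops P = distinctTops P' :=
  image_congr fun i _ => h i.1 i.2

lemma distinctTops_const (hN : N.Nonempty) (p : Pref (Finset O)) :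
    distinctTops (fun _ _ => p : Profile (Finset O) N) = {p.top} :=
  image_const hN.attach _

lemma distinctTops_relabel (P : Profile (Finset O) N) (μ : Equiv.Perm O) :
    distinctTops (fun i hi => (P i hi).relabel μ.finsetCongr) =
      (distinctTops P).image μ.finsetCongr := by
  rw [distinctTops, distinctTops, image_image]
  exact image_congr fun i _ => Pref.relabel_top _ _

lemma distinctTops_eq_insert_erase (P : Profile (Finset O) N) {i : ℕ} (hi : i ∈ N) :
    distinctTops P =
      insert (P i hi).top
        (distinctTops fun j (hj : j ∈ N.erase i) => P j (mem_of_mem_erase hj)) := by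
  ext T
  simp only [mem_insert, mem_distinctTops, mem_erase]
  constructor
  · rintro ⟨j, hj, rfl⟩
    by_cases hji : j = i
    · subst hji; exact Or.inl rfl
    · exact Or.inr ⟨j, ⟨hji, hj⟩, rfl⟩
  · rintro (rfl | ⟨j, ⟨-, hj⟩, rfl⟩)
    exacts [⟨i, hi, rfl⟩, ⟨j, hj, rfl⟩]

lemma distinctTops_union_of_clones {N' : Finset ℕ} (P : Profile (Finset O) (N ∪ N')) {i : ℕ}
    (hi : i ∈ N)
    (hclone : ∀ j (hj : j ∈ N'), P j (mem_union_right N hj) = P i (mem_union_left N' hi)) :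
    distinctTops P = distinctTops fun j (hj : j ∈ N) => P j (mem_union_left N' hj) := by
  ext T
  simp only [mem_distinctTops]
  constructor
  · rintro ⟨j, hj, rfl⟩
    rcases mem_union.mp hj with hjN | hjN'
    · exact ⟨j, hjN, rfl⟩
    · exact ⟨i, hi, by rw [hclone j hjN']⟩
  · rintro ⟨j, hj, rfl⟩
    exact ⟨j, mem_union_left N' hj, rfl⟩

end DistinctTops

theorem stmt_6_general {O : Type*} [Fintype O] [DecidableEq O] :
    OntoOn (SepDom O) (fGt O) ∧ TopsOnlyOn (SepDom O) (fGt O) ∧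
    FalseNameProofOn (SepDom O) (fGt O) ∧ ParticipationOn (SepDom O) (fGt O) ∧
    ObjectNeutralOn (SepDom O) (fGt O) := by
  refine ⟨?onto, ?topsOnly, ?falseNameProof, ?participation, ?objectNeutral⟩
  case onto =>
    intro N hN a
    refine ⟨fun _ _ => hammingPref a, fun _ _ => hammingPref_separable a, ?_⟩
    rw [fGt_eq_strictMajority, distinctTops_const hN, hammingPref_top, strictMajority_singleton]
  case topsOnly =>
    intro N _ P P' _ _ htops
    rw [fGt_eq_strictMajority, fGt_eq_strictMajority, distinctTops_congr htops]
  case falseNameProof =>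
    intro N N' _ _ _ P _ i hi hclone
    rw [fGt_eq_strictMajority, fGt_eq_strictMajority, distinctTops_union_of_clones P hi hclone]
    exact Pref.wpref_refl _ _
  case participation =>
    intro N _ P hP i hi
    apply (hP i hi).wpref_of_symmDiff_top_subset
    rw [fGt_eq_strictMajority, fGt_eq_strictMajority, distinctTops_eq_insert_erase P hi]
    exact symmDiff_strictMajority_insert_subset _ _
  case objectNeutral =>
    intro μ N _ P _
    rw [fGt_eq_strictMajority, fGt_eq_strictMajority, distinctTops_relabel,
      strictMajority_image_finsetCongr]

/-- On the domain of separable preferences, the rule `f^>` (an object is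
chosen iff it belongs to strictly more than half of the distinct top sets of the profile)
satisfies ontoness, tops-onliness, false-name-proofness, participation and object
neutrality. -/
theorem stmt_6 {O : Type*} [Fintype O] [DecidableEq O] (hO : 2 ≤ Fintype.card O) :
    OntoOn (SepDom O) (fGt O) ∧ TopsOnlyOn (SepDom O) (fGt O) ∧
    FalseNameProofOn (SepDom O) (fGt O) ∧ ParticipationOn (SepDom O) (fGt O) ∧
    ObjectNeutralOn (SepDom O) (fGt O) :=
  stmt_6_general
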